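/- arXiv:2003.06267 — 2 statements merged into one kernel-verified Lean document; each statement's English description precedes it below -/
import Mathlib

section
/- The order of extremal realisations of a family of configurations F (isomorphism classes of extremal realisations, ordered by ρ' ⊑ ρ iff there is a map of realisations from ρ to ρ') forms a prime algebraic domain whose complete primes are exactly the isomorphism classes of prime extremal realisations: it has least upper bounds of compatible subsets, and every element is the least upper bound of the complete primes below it, a complete prime being an element p such that whenever p ⊑ ⊔X for a compatible subset X, p ⊑ x for some x ∈ X. -/
universe u v w

/-- The image of a set under a partial function. -/
def pimage {α : Type u} {β : Type v} (f : α → Option β) (x : Set α) : Set β :=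
  {b | ∃ a ∈ x, f a = some b}

/-- A family of configurations over the set of events `A`:
a non-empty family of subsets, whose underlying set is all of `A`,
closed under unions of finitely compatible subfamilies,
and satisfying the securing-chain condition. -/
structure ConfigFamily (A : Type u) where
  F : Set (Set A)
  nonempty : F.Nonempty
  covers : ∀ a : A, ∃ x ∈ F, a ∈ x
  unionClosed : ∀ X ⊆ F, (∀ Y ⊆ X, Y.Finite → ∃ z ∈ F, ∀ y ∈ Y, y ⊆ z) → ⋃₀ X ∈ F
  secured : ∀ x ∈ F, ∀ e ∈ x, ∃ l : List A, l ≠ [] ∧ l.getLast? = some e ∧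
    (∀ a ∈ l, a ∈ x) ∧ ∀ i, 0 < i → i ≤ l.length → {a | a ∈ l.take i} ∈ F

/-- A causal realisation of the family `C`: a partial order whose
principal lower sets are finite, together with a function to events
sending every down-closed subset to a configuration of the family. -/
structure Realisation {A : Type u} (C : ConfigFamily A) where
  carrier : Type u
  le : carrier → carrier → Prop
  le_refl : ∀ a, le a a
  le_trans : ∀ a b c, le a b → le b c → le a c
  le_antisymm : ∀ a b, le a b → le b a → a = b
  finPast : ∀ e, {e' | le e' e}.Finite
  ρ : carrier → A
  real : ∀ x : Set carrier, (∀ a ∈ x, ∀ b, le b a → b ∈ x) → ρ '' x ∈ C.F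

namespace Realisation

variable {A : Type u} {C : ConfigFamily A}

/-- Down-closed subsets of the carrier of a realisation. -/
def IsDown (r : Realisation C) (x : Set r.carrier) : Prop :=
  ∀ a ∈ x, ∀ b, r.le b a → b ∈ x

/-- The set `[a) = [a] \ {a}` of strict predecessors. -/
def spred (r : Realisation C) (a : r.carrier) : Set r.carrier :=
  {b | r.le b a ∧ b ≠ a}

/-- The carrier has a top element. -/
def HasTop (r : Realisation C) : Prop := ∃ t, ∀ a, r.le a t

end Realisation

/-- A map of realisations: a partial surjective function between the carriers,
preserving down-closed subsets and commuting with the functions to events. -/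
structure RealMap {A : Type u} {C : ConfigFamily A} (r r' : Realisation C) where
  f : r.carrier → Option r'.carrier
  surj : ∀ b, ∃ a, f a = some b
  presDown : ∀ x, r.IsDown x → r'.IsDown (pimage f x)
  commutes : ∀ a b, f a = some b → r.ρ a = r'.ρ b

namespace RealMap

variable {A : Type u} {C : ConfigFamily A} {r r' r₀ : Realisation C}

/-- The map is total. -/
def IsTotal (m : RealMap r r') : Prop := ∀ a, ∃ b, m.f a = some b

/-- The map is an isomorphism of realisations: it has an inverse map of
realisations, given by the inverse relation. -/
def IsIso (m : RealMap r r') : Prop :=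
  ∃ m' : RealMap r' r, ∀ a b, m.f a = some b ↔ m'.f b = some a

/-- `m : r → r₀` is a projection witnessed by `g`: `g` realises the carrier of
`r₀` as a subset of the carrier of `r` with the restricted order and restricted
function to events, and `m` is the inverse relation of this inclusion. -/
def IsProjectionVia (m : RealMap r r₀) (g : r₀.carrier → r.carrier) : Prop :=
  Function.Injective g ∧ (∀ a b, r₀.le a b ↔ r.le (g a) (g b)) ∧
    (∀ a, r₀.ρ a = r.ρ (g a)) ∧ (∀ a b, m.f a = some b ↔ g b = a)

/-- `m` is a projection. -/
def IsProjection (m : RealMap r r₀) : Prop := ∃ g, m.IsProjectionVia g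

end RealMap

/-- A realisation is extremal when every total map of realisations from it
is an isomorphism. -/
def Realisation.Extremal {A : Type u} {C : ConfigFamily A} (r : Realisation C) : Prop :=
  ∀ (r' : Realisation C) (m : RealMap r r'), m.IsTotal → m.IsIso

/-- A prime extremal realisation: extremal with a top element. -/
def Realisation.PrimeExtremal {A : Type u} {C : ConfigFamily A} (r : Realisation C) : Prop :=
  r.Extremal ∧ r.HasTop

/-- Isomorphism of realisations. -/
def RealIso {A : Type u} {C : ConfigFamily A} (r r' : Realisation C) : Prop :=
  ∃ m : RealMap r r', m.IsIso

/-- `m` is the composite of `m₁` followed by `m₂` (as partial functions). -/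
def CompEq {A : Type u} {C : ConfigFamily A} {r r' r'' : Realisation C}
    (m₁ : RealMap r r') (m₂ : RealMap r' r'') (m : RealMap r r'') : Prop :=
  ∀ a c, m.f a = some c ↔ ∃ b, m₁.f a = some b ∧ m₂.f b = some c

/-- The order on extremal realisations: `RLe r r'` means `r ⊑ r'`, i.e. there
is a map of realisations from `r'` to `r`. -/
def RLe {A : Type u} {C : ConfigFamily A} (r r' : Realisation C) : Prop :=
  Nonempty (RealMap r' r)

/-- `s` is a least upper bound of the set `X` in the order of extremal
realisations. -/
def RIsLub {A : Type u} {C : ConfigFamily A} (X : Set (Realisation C))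
    (s : Realisation C) : Prop :=
  s.Extremal ∧ (∀ x ∈ X, RLe x s) ∧
    ∀ u : Realisation C, u.Extremal → (∀ x ∈ X, RLe x u) → RLe s u

/-- `p` is a complete prime in the order of extremal realisations. -/
def RCompletePrime {A : Type u} {C : ConfigFamily A} (p : Realisation C) : Prop :=
  p.Extremal ∧ ∀ (X : Set (Realisation C)) (s : Realisation C),
    (∀ x ∈ X, Realisation.Extremal x) → RIsLub X s → RLe p s → ∃ x ∈ X, RLe p x

/-!
A map out of an extremal realisation `w` is rigid. Its domain is down-closed (otherwise cutting
the links into the domain would give a non-invertible total map out of `w`), and on it the map is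
an order embedding (otherwise grafting the target in place of the domain would give one). So the
map exhibits its target as a down-closed part of `w`. Extremal realisations are moreover
separated: two events with the same label and the same strict past could be identified by a
total map. By induction on causal depth, two embeddings of one realisation into a separated one
agree; hence maps out of extremal realisations are unique, and maps into restrictions of an
extremal realisation glue together.

Least upper bounds are then restrictions of a common upper bound to the union of the domains of
its maps, the complete primes are the restrictions to principal down-sets, and every extremal
realisation is glued from those.
-/

noncomputable section

open scoped Classical

theorem ConfigFamily.union_mem {A : Type u} (C : ConfigFamily A) {x y z : Set A}
    (hx : x ∈ C.F) (hy : y ∈ C.F) (hz : z ∈ C.F) (hxz : x ⊆ z) (hyz : y ⊆ z) :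
    x ∪ y ∈ C.F := by
  rw [← Set.sUnion_pair]
  refine C.unionClosed _ (by rintro _ (rfl | rfl) <;> assumption) fun Y hY _ => ⟨z, hz, ?_⟩
  intro _ h
  rcases hY h with rfl | rfl <;> assumption

theorem Set.Finite.pimage {α β : Type*} {x : Set α} (hx : x.Finite) (f : α → Option β) :
    (pimage f x).Finite :=
  show (some ⁻¹' (f '' x)).Finite from (hx.image f).preimage (Option.some_injective β).injOn

/-- The partial function with graph `R`; for non-functional `R` its value is an arbitrary
choice. -/
def partialOfRel {α β : Type*} (R : α → β → Prop) (a : α) : Option β :=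
  if h : ∃ b, R a b then some h.choose else none

theorem partialOfRel_eq_some {α β : Type*} {R : α → β → Prop}
    (hR : ∀ {a b b'}, R a b → R a b' → b = b') {a : α} {b : β} :
    partialOfRel R a = some b ↔ R a b := by
  unfold partialOfRel
  split_ifs with h
  · exact ⟨fun e => Option.some.inj e ▸ h.choose_spec,
      fun hb => congrArg some (hR h.choose_spec hb)⟩
  · simpa only [reduceCtorEq, false_iff] using fun hb => h ⟨b, hb⟩

variable {A : Type u} {C : ConfigFamily A}

/-! ### Restrictions and past bisimulations -/

namespace Realisation

variable {r r' r'' : Realisation C}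

theorem isDown_Iic (r : Realisation C) (a : r.carrier) : r.IsDown {c | r.le c a} :=
  fun _ hc _ hb => r.le_trans _ _ _ hb hc

theorem isDown_iUnion {ι : Sort*} {D : ι → Set r.carrier} (hD : ∀ i, r.IsDown (D i)) :
    r.IsDown (⋃ i, D i) := by
  intro a ha b hba
  obtain ⟨i, hi⟩ := Set.mem_iUnion.1 ha
  exact Set.mem_iUnion.2 ⟨i, hD i a hi b hba⟩

def downClosure (r : Realisation C) (y : Set r.carrier) : Set r.carrier :=
  {c | ∃ a ∈ y, r.le c a}

theorem isDown_downClosure (y : Set r.carrier) : r.IsDown (r.downClosure y) := by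
  rintro c ⟨a, ha, hca⟩ b hbc
  exact ⟨a, ha, r.le_trans _ _ _ hbc hca⟩

theorem subset_downClosure (y : Set r.carrier) : y ⊆ r.downClosure y :=
  fun a ha => ⟨a, ha, r.le_refl a⟩

theorem image_downClosure_mem (y : Set r.carrier) : r.ρ '' r.downClosure y ∈ C.F :=
  r.real _ (r.isDown_downClosure y)

theorem wellFounded_spred (r : Realisation C) : WellFounded fun a b => a ∈ r.spred b := by
  refine (measure fun a => (r.finPast a).toFinset.card).wf.mono fun a b hab => ?_
  obtain ⟨hab, hne⟩ := hab
  refine Finset.card_lt_card (Set.Finite.toFinset_ssubset_toFinset.2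
    (ssubset_of_subset_not_superset (fun c hc => r.le_trans c a b hc hab) fun h => ?_))
  exact hne (r.le_antisymm a b hab (h (r.le_refl b)))

def Separated (r : Realisation C) : Prop :=
  ∀ a b, r.ρ a = r.ρ b → r.spred a = r.spred b → a = b

def restrict (r : Realisation C) (D : Set r.carrier) (hD : r.IsDown D) : Realisation C where
  carrier := D
  le a b := r.le a b
  le_refl a := r.le_refl a
  le_trans a b c := r.le_trans a b c
  le_antisymm a b hab hba := Subtype.ext (r.le_antisymm a b hab hba)
  finPast e := (r.finPast e).preimage Subtype.val_injective.injOn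
  ρ a := r.ρ a
  real x hx := by
    have hdown : r.IsDown (Subtype.val '' x) := by
      rintro _ ⟨a, ha, rfl⟩ b hba
      exact ⟨⟨b, hD a a.2 b hba⟩, hx a ha _ hba, rfl⟩
    simpa only [Set.image_image] using r.real _ hdown

structure PastBisim (r r' : Realisation C) (R : r.carrier → r'.carrier → Prop) : Prop where
  rho_eq : ∀ {a b}, R a b → r.ρ a = r'.ρ b
  forth : ∀ {a b}, R a b → ∀ a' ∈ r.spred a, ∃ b' ∈ r'.spred b, R a' b'
  back : ∀ {a b}, R a b → ∀ b' ∈ r'.spred b, ∃ a' ∈ r.spred a, R a' b'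

namespace PastBisim

variable {R : r.carrier → r'.carrier → Prop} {S : r'.carrier → r''.carrier → Prop}

theorem symm (h : PastBisim r r' R) : PastBisim r' r (flip R) :=
  ⟨fun hab => (h.rho_eq hab).symm, h.back, h.forth⟩

theorem comp (hR : PastBisim r r' R) (hS : PastBisim r' r'' S) :
    PastBisim r r'' fun a c => ∃ b, R a b ∧ S b c where
  rho_eq := fun ⟨_, hab, hbc⟩ => (hR.rho_eq hab).trans (hS.rho_eq hbc)
  forth := by
    rintro a c ⟨b, hab, hbc⟩ a' ha'
    obtain ⟨b', hb', hab'⟩ := hR.forth hab a' ha'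
    obtain ⟨c', hc', hbc'⟩ := hS.forth hbc b' hb'
    exact ⟨c', hc', b', hab', hbc'⟩
  back := by
    rintro a c ⟨b, hab, hbc⟩ c' hc'
    obtain ⟨b', hb', hbc'⟩ := hS.back hbc c' hc'
    obtain ⟨a', ha', hab'⟩ := hR.back hab b' hb'
    exact ⟨a', ha', b', hab', hbc'⟩

theorem eq_of_separated (hsep : r'.Separated) {R S : r.carrier → r'.carrier → Prop}
    (hR : PastBisim r r' R) (hS : PastBisim r r' S) {a : r.carrier} {b b' : r'.carrier}
    (hab : R a b) (hab' : S a b') : b = b' := by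
  induction a using r.wellFounded_spred.induction generalizing b b' with
  | _ a ih =>
  refine hsep b b' ((hR.rho_eq hab).symm.trans (hS.rho_eq hab')) (Set.ext fun c => ⟨?_, ?_⟩)
  · intro hc
    obtain ⟨a', ha', hRc⟩ := hR.back hab c hc
    obtain ⟨c', hc', hSc⟩ := hS.forth hab' a' ha'
    rwa [ih a' ha' hRc hSc]
  · intro hc
    obtain ⟨a', ha', hSc⟩ := hS.back hab' c hc
    obtain ⟨c', hc', hRc⟩ := hR.forth hab a' ha'
    rwa [← ih a' ha' hRc hSc]

end PastBisim

theorem pastBisim_val {D : Set r.carrier} (hD : r.IsDown D) :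
    PastBisim (r.restrict D hD) r fun d a => d.1 = a where
  rho_eq := by rintro d _ rfl; rfl
  forth := by
    rintro d _ rfl d' ⟨hle, hne⟩
    exact ⟨d'.1, ⟨hle, fun h => hne (Subtype.ext h)⟩, rfl⟩
  back := by
    rintro d _ rfl a ⟨hle, hne⟩
    exact ⟨⟨a, hD d.1 d.2 a hle⟩, ⟨hle, fun h => hne (congrArg Subtype.val h)⟩, rfl⟩

end Realisation

/-! ### Maps of realisations given by their graphs -/

namespace RealMap

variable {r r' r'' : Realisation C}

def dom (m : RealMap r r') : Set r.carrier := {a | ∃ b, m.f a = some b}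

theorem ext {m m' : RealMap r r'} (h : ∀ a, m.f a = m'.f a) : m = m' := by
  cases m
  cases m'
  cases funext h
  rfl

theorem lift (m : RealMap r r') {a : r.carrier} {b b' : r'.carrier} (hab : m.f a = some b)
    (hb : r'.le b' b) : ∃ a', r.le a' a ∧ m.f a' = some b' :=
  m.presDown _ (r.isDown_Iic a) b ⟨a, r.le_refl a, hab⟩ b' hb

def ofRel (R : r.carrier → r'.carrier → Prop)
    (functional : ∀ {a b b'}, R a b → R a b' → b = b') (surj : ∀ b, ∃ a, R a b)
    (lift : ∀ {a b}, R a b → ∀ b', r'.le b' b → ∃ a', r.le a' a ∧ R a' b')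
    (rho_eq : ∀ {a b}, R a b → r.ρ a = r'.ρ b) : RealMap r r' where
  f := partialOfRel R
  surj b := (surj b).imp fun _ => (partialOfRel_eq_some (R := R) functional).2
  presDown x hx := by
    rintro b ⟨a, ha, hab⟩ b' hb
    obtain ⟨a', ha', hRa'⟩ := lift ((partialOfRel_eq_some (R := R) functional).1 hab) b' hb
    exact ⟨a', hx a ha a' ha', (partialOfRel_eq_some (R := R) functional).2 hRa'⟩
  commutes _ _ hab := rho_eq ((partialOfRel_eq_some (R := R) functional).1 hab)

theorem ofRel_f_eq_some {R : r.carrier → r'.carrier → Prop} {functional surj lift rho_eq}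
    {a : r.carrier} {b : r'.carrier} :
    (ofRel R functional surj lift rho_eq).f a = some b ↔ R a b :=
  partialOfRel_eq_some (R := R) functional

protected def id (r : Realisation C) : RealMap r r :=
  ofRel Eq (fun h h' => h.symm.trans h') (fun b => ⟨b, rfl⟩)
    (by rintro a _ rfl b' hb; exact ⟨b', hb, rfl⟩) (by rintro a _ rfl; rfl)

theorem id_f (a : r.carrier) : (RealMap.id r).f a = some a :=
  ofRel_f_eq_some.2 rfl

def trans (m₁ : RealMap r r') (m₂ : RealMap r' r'') : RealMap r r'' :=
  ofRel (fun a c => ∃ b, m₁.f a = some b ∧ m₂.f b = some c)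
    (by
      rintro a c c' ⟨b, hab, hbc⟩ ⟨b', hab', hbc'⟩
      cases hab.symm.trans hab'
      exact Option.some.inj (hbc.symm.trans hbc'))
    (by
      intro c
      obtain ⟨b, hb⟩ := m₂.surj c
      obtain ⟨a, ha⟩ := m₁.surj b
      exact ⟨a, b, ha, hb⟩)
    (by
      rintro a c ⟨b, hab, hbc⟩ c' hc
      obtain ⟨b', hb', hbc'⟩ := m₂.lift hbc hc
      obtain ⟨a', ha', hab'⟩ := m₁.lift hab hb'
      exact ⟨a', ha', b', hab', hbc'⟩)
    (fun ⟨b, hab, hbc⟩ => (m₁.commutes _ b hab).trans (m₂.commutes b _ hbc))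

theorem trans_f_eq_some {m₁ : RealMap r r'} {m₂ : RealMap r' r''} {a : r.carrier}
    {c : r''.carrier} :
    (m₁.trans m₂).f a = some c ↔ ∃ b, m₁.f a = some b ∧ m₂.f b = some c :=
  ofRel_f_eq_some

def toRestrict (r : Realisation C) (D : Set r.carrier) (hD : r.IsDown D) :
    RealMap r (r.restrict D hD) :=
  ofRel (fun a d => d.1 = a) (fun h h' => Subtype.ext (h.trans h'.symm)) (fun d => ⟨d.1, rfl⟩)
    (by rintro _ d rfl d' hd; exact ⟨d'.1, hd, rfl⟩) (by rintro _ d rfl; rfl)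

theorem toRestrict_f_eq_some {D : Set r.carrier} {hD : r.IsDown D} {a : r.carrier}
    {d : (r.restrict D hD).carrier} : (toRestrict r D hD).f a = some d ↔ d.1 = a :=
  ofRel_f_eq_some

theorem dom_toRestrict (D : Set r.carrier) (hD : r.IsDown D) : (toRestrict r D hD).dom = D :=
  Set.ext fun a => ⟨fun ⟨d, hd⟩ => toRestrict_f_eq_some.1 hd ▸ d.2,
    fun ha => ⟨⟨a, ha⟩, toRestrict_f_eq_some.2 rfl⟩⟩

def ofRestrictOfForallMem {D : Set r.carrier} (hD : r.IsDown D) (hcover : ∀ a, a ∈ D) :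
    RealMap (r.restrict D hD) r :=
  ofRel (fun d a => d.1 = a) (fun h h' => h.symm.trans h') (fun a => ⟨⟨a, hcover a⟩, rfl⟩)
    (by rintro d _ rfl a ha; exact ⟨⟨a, hcover a⟩, ha, rfl⟩) (by rintro d _ rfl; rfl)

def restrictDom (m : RealMap r r') (hm : r.IsDown m.dom) : RealMap (r.restrict m.dom hm) r' :=
  ofRel (fun d b => m.f d.1 = some b) (fun h h' => Option.some.inj (h.symm.trans h'))
    (fun b => (m.surj b).elim fun a ha => ⟨⟨a, b, ha⟩, ha⟩)
    (by
      intro d b hdb b' hb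
      obtain ⟨a', ha', hab'⟩ := m.lift hdb hb
      exact ⟨⟨a', b', hab'⟩, ha', hab'⟩)
    (fun h => m.commutes _ _ h)

theorem IsIso.injective {m : RealMap r r'} (h : m.IsIso) {a a' : r.carrier} {b : r'.carrier}
    (ha : m.f a = some b) (ha' : m.f a' = some b) : a = a' := by
  obtain ⟨m', hm'⟩ := h
  exact Option.some.inj (((hm' a b).1 ha).symm.trans ((hm' a' b).1 ha'))

theorem IsIso.monotone {m : RealMap r r'} (h : m.IsIso) {a a' : r.carrier} {b b' : r'.carrier}
    (ha : m.f a = some b) (ha' : m.f a' = some b') (hle : r.le a' a) : r'.le b' b := by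
  obtain ⟨m', hm'⟩ := h
  obtain ⟨b'', hb'', hm'b''⟩ := m'.lift ((hm' a b).1 ha) hle
  cases ha'.symm.trans ((hm' a' b'').2 hm'b'')
  exact hb''

theorem isIso_of_injective_of_monotone {m : RealMap r r'} (htot : m.IsTotal)
    (hinj : ∀ {a a' b}, m.f a = some b → m.f a' = some b → a = a')
    (hmono : ∀ {a a' b b'}, m.f a = some b → m.f a' = some b' → r.le a' a → r'.le b' b) :
    m.IsIso := by
  have lift : ∀ {b a}, m.f a = some b → ∀ a', r.le a' a →
      ∃ b', r'.le b' b ∧ m.f a' = some b' :=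
    fun hab a' ha' => (htot a').elim fun b' hb' => ⟨b', hmono hab hb' ha', hb'⟩
  exact ⟨ofRel (fun b a => m.f a = some b) hinj (fun a => htot a) lift
    (fun h => (m.commutes _ _ h).symm), fun a b => by rw [ofRel_f_eq_some]⟩

end RealMap

/-! ### Extremal realisations are separated, and their maps are embeddings -/

namespace Realisation

variable {v : Realisation C} {x y : v.carrier}

def collapseFun (hxy : x ≠ y) (a : v.carrier) : {a : v.carrier // a ≠ y} :=
  if h : a = y then ⟨x, hxy⟩ else ⟨a, h⟩

theorem collapseFun_of_ne (hxy : x ≠ y) {a : v.carrier} (ha : a ≠ y) :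
    collapseFun hxy a = ⟨a, ha⟩ :=
  dif_neg ha

theorem collapseFun_self (hxy : x ≠ y) : collapseFun hxy y = ⟨x, hxy⟩ :=
  dif_pos rfl

/-- The quotient of `v` identifying `y` with `x`; the class of `y` is represented by `x`. -/
def collapse (v : Realisation C) {x y : v.carrier} (hyx : ¬ v.le y x) (hρ : v.ρ x = v.ρ y)
    (hpast : ∀ c ∈ v.spred y, v.le c x) : Realisation C where
  carrier := {a : v.carrier // a ≠ y}
  le a b := v.le a b ∨ (v.le a x ∧ v.le y b)
  le_refl a := Or.inl (v.le_refl a)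
  le_trans a b c := by
    rintro (hab | ⟨hax, hyb⟩) (hbc | ⟨hbx, hyc⟩)
    · exact Or.inl (v.le_trans _ _ _ hab hbc)
    · exact Or.inr ⟨v.le_trans _ _ _ hab hbx, hyc⟩
    · exact Or.inr ⟨hax, v.le_trans _ _ _ hyb hbc⟩
    · exact (hyx (v.le_trans _ _ _ hyb hbx)).elim
  le_antisymm a b := by
    rintro (hab | ⟨hax, hyb⟩) (hba | ⟨hbx, hya⟩)
    · exact Subtype.ext (v.le_antisymm _ _ hab hba)
    · exact (hyx (v.le_trans _ _ _ (v.le_trans _ _ _ hya hab) hbx)).elim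
    · exact (hyx (v.le_trans _ _ _ (v.le_trans _ _ _ hyb hba) hax)).elim
    · exact (hyx (v.le_trans _ _ _ hyb hbx)).elim
  finPast e := by
    refine (((v.finPast e).union (v.finPast x)).preimage Subtype.val_injective.injOn).subset ?_
    rintro c (hc | ⟨hc, -⟩)
    exacts [Or.inl hc, Or.inr hc]
  ρ a := v.ρ a
  real Z hZ := by
    have hxy : x ≠ y := fun h => hyx (h ▸ v.le_refl x)
    have hdown : v.IsDown (collapseFun hxy ⁻¹' Z) := by
      intro a ha b hba
      refine hZ _ ha _ ?_
      by_cases hb : b = y <;> by_cases ha : a = y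
      · subst hb ha
        exact Or.inl (v.le_refl _)
      · rw [hb, collapseFun_self, collapseFun_of_ne hxy ha]
        exact Or.inr ⟨v.le_refl x, hb ▸ hba⟩
      · rw [ha, collapseFun_self, collapseFun_of_ne hxy hb]
        exact Or.inl (hpast b ⟨ha ▸ hba, hb⟩)
      · rw [collapseFun_of_ne hxy ha, collapseFun_of_ne hxy hb]
        exact Or.inl hba
    have hρφ : ∀ a, v.ρ (collapseFun hxy a) = v.ρ a := by
      intro a
      by_cases ha : a = y
      · rw [ha, collapseFun_self, hρ]
      · rw [collapseFun_of_ne hxy ha]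
    convert v.real _ hdown using 1
    ext e
    constructor
    · rintro ⟨a, ha, rfl⟩
      exact ⟨a, by rwa [Set.mem_preimage, collapseFun_of_ne hxy a.2], rfl⟩
    · rintro ⟨a, ha, rfl⟩
      exact ⟨_, ha, hρφ a⟩

theorem Extremal.separated (hv : v.Extremal) : v.Separated := by
  intro x y hρ hpast
  by_contra hxy
  have hyx : ¬ v.le y x := fun h => ((Set.ext_iff.1 hpast y).1 ⟨h, Ne.symm hxy⟩).2 rfl
  have hxpast : ∀ c, v.le c x → c = x ∨ v.le c y := fun c hc =>
    or_iff_not_imp_left.2 fun hcx => ((Set.ext_iff.1 hpast c).1 ⟨hc, hcx⟩).1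
  let v' := v.collapse hyx hρ fun c hc => ((Set.ext_iff.1 hpast c).2 hc).1
  have lift : ∀ {a} {b : v'.carrier}, b = collapseFun hxy a → ∀ c, v'.le c b →
      ∃ a', v.le a' a ∧ c = collapseFun hxy a' := by
    rintro a _ rfl c hc
    have below_x : v.le c.1 x → v.le y a → ∃ a', v.le a' a ∧ c = collapseFun hxy a' := by
      intro hcx hya
      rcases hxpast c.1 hcx with h | h
      · exact ⟨y, hya, by rw [collapseFun_self]; exact Subtype.ext h⟩
      · exact ⟨c.1, v.le_trans _ _ _ h hya, (collapseFun_of_ne hxy c.2).symm⟩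
    by_cases ha : a = y
    · rw [ha, collapseFun_self] at hc
      exact below_x (hc.elim id And.left) (by rw [ha]; exact v.le_refl y)
    · rw [collapseFun_of_ne hxy ha] at hc
      rcases hc with hc | ⟨hcx, hya⟩
      · exact ⟨c.1, hc, (collapseFun_of_ne hxy c.2).symm⟩
      · exact below_x hcx hya
  have hρφ : ∀ {a} {b : v'.carrier}, b = collapseFun hxy a → v.ρ a = v'.ρ b := by
    rintro a _ rfl
    by_cases ha : a = y
    · rw [ha, collapseFun_self]
      exact hρ.symm
    · rw [collapseFun_of_ne hxy ha]
      rfl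
  let σ : RealMap v v' := RealMap.ofRel (fun a b => b = collapseFun hxy a)
    (fun h h' => h.trans h'.symm) (fun b => ⟨b.1, (collapseFun_of_ne hxy b.2).symm⟩) lift hρφ
  have hiso : σ.IsIso := hv v' σ fun a => ⟨_, RealMap.ofRel_f_eq_some.2 rfl⟩
  have hσx : σ.f x = some (collapseFun hxy x) := RealMap.ofRel_f_eq_some.2 rfl
  have hσy : σ.f y = some (collapseFun hxy x) := RealMap.ofRel_f_eq_some.2 <| by
    rw [collapseFun_self, collapseFun_of_ne hxy hxy]
  exact hxy (hiso.injective hσx hσy)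

end Realisation

theorem RealMap.image_rho_mem_of_relDown {r r' : Realisation C} (m : RealMap r r')
    {y : Set r.carrier} (hy : y ⊆ m.dom)
    (hdown : ∀ a ∈ y, ∀ b ∈ m.dom, r.le b a → b ∈ y) :
    r.ρ '' y ∈ C.F := by
  convert r'.real _ (m.presDown _ (r.isDown_downClosure y)) using 1
  ext e
  constructor
  · rintro ⟨a, ha, rfl⟩
    obtain ⟨b, hb⟩ := hy ha
    exact ⟨b, ⟨a, r.subset_downClosure y ha, hb⟩, (m.commutes a b hb).symm⟩
  · rintro ⟨b, ⟨a, ⟨a₀, ha₀, haa₀⟩, hab⟩, rfl⟩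
    exact ⟨a, hdown a₀ ha₀ a ⟨b, hab⟩ haa₀, m.commutes a b hab⟩

namespace Realisation

variable {w x : Realisation C}

def cutInto (w : Realisation C) (m : RealMap w x) : Realisation C where
  carrier := w.carrier
  le a b := w.le a b ∧ (b ∈ m.dom → a ∈ m.dom)
  le_refl a := ⟨w.le_refl a, id⟩
  le_trans a b c hab hbc := ⟨w.le_trans a b c hab.1 hbc.1, fun hc => hab.2 (hbc.2 hc)⟩
  le_antisymm a b hab hba := w.le_antisymm a b hab.1 hba.1
  finPast e := (w.finPast e).subset fun _ hc => hc.1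
  ρ := w.ρ
  real Z hZ := by
    have hinter : w.ρ '' (Z ∩ m.dom) ∈ C.F :=
      m.image_rho_mem_of_relDown Set.inter_subset_right fun a ha b hb hba =>
        ⟨hZ a ha.1 b ⟨hba, fun _ => hb⟩, hb⟩
    have hsplit : Z = Z ∩ m.dom ∪ w.downClosure (Z \ m.dom) := by
      ext a
      constructor
      · intro ha
        by_cases had : a ∈ m.dom
        · exact Or.inl ⟨ha, had⟩
        · exact Or.inr (w.subset_downClosure _ ⟨ha, had⟩)
      · rintro (ha | ⟨b, ⟨hb, hbd⟩, hab⟩)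
        · exact ha.1
        · exact hZ b hb a ⟨hab, fun h => (hbd h).elim⟩
    rw [hsplit, Set.image_union]
    refine C.union_mem hinter (w.image_downClosure_mem _) (w.image_downClosure_mem Z) ?_ ?_
    · exact Set.image_mono (Set.inter_subset_left.trans (w.subset_downClosure Z))
    · exact Set.image_mono fun a ⟨b, hb, hab⟩ => ⟨b, hb.1, hab⟩

/-- The identity `w → w.cutInto m` is total, hence an isomorphism, so no link into `m.dom` was
cut. -/
theorem Extremal.isDown_dom (hw : w.Extremal) (m : RealMap w x) : w.IsDown m.dom := by
  let q := cutInto w m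
  let ι : RealMap w q := RealMap.ofRel (fun a b => a = b) (fun h h' => h.symm.trans h')
    (fun b => ⟨b, rfl⟩) (by rintro a _ rfl b' hb; exact ⟨b', hb.1, rfl⟩)
    (by rintro a _ rfl; rfl)
  have hι : ∀ a, ι.f a = some a := fun a => RealMap.ofRel_f_eq_some.2 rfl
  have hiso : ι.IsIso := hw q ι fun a => ⟨a, hι a⟩
  intro a ha b hba
  exact (hiso.monotone (hι a) (hι b) hba).2 ha

/-- `w` with its down-closed part `D` replaced by the image `y` of the total map `h`. -/
def graft (w : Realisation C) {D : Set w.carrier} (hD : w.IsDown D) {y : Realisation C}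
    (h : RealMap (w.restrict D hD) y) (htot : h.IsTotal) : Realisation C where
  carrier := y.carrier ⊕ {a : w.carrier // a ∉ D}
  le p p' := match p, p' with
    | .inl c, .inl c' => y.le c c'
    | .inl c, .inr e => ∃ d : D, w.le d e ∧ h.f d = some c
    | .inr _, .inl _ => False
    | .inr e, .inr e' => w.le e e'
  le_refl
    | .inl c => y.le_refl c
    | .inr e => w.le_refl e
  le_trans := by
    rintro (c | e) (c' | e') (c'' | e'') h₁ h₂
    · exact y.le_trans _ _ _ h₁ h₂
    · obtain ⟨d, hd, hdc⟩ := h₂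
      obtain ⟨d', hd', hd'c⟩ := h.lift hdc h₁
      exact ⟨d', w.le_trans _ _ _ hd' hd, hd'c⟩
    · exact h₂.elim
    · obtain ⟨d, hd, hdc⟩ := h₁
      exact ⟨d, w.le_trans _ _ _ hd h₂, hdc⟩
    all_goals first | exact h₁.elim | exact h₂.elim | exact w.le_trans _ _ _ h₁ h₂
  le_antisymm := by
    rintro (c | e) (c' | e') h₁ h₂
    · exact congrArg Sum.inl (y.le_antisymm _ _ h₁ h₂)
    · exact h₂.elim
    · exact h₁.elim
    · exact congrArg Sum.inr (Subtype.ext (w.le_antisymm _ _ h₁ h₂))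
  finPast
    | .inl c => by
      refine ((y.finPast c).image Sum.inl).subset ?_
      rintro (c' | e') hp
      exacts [⟨c', hp, rfl⟩, hp.elim]
    | .inr e => by
      have hpast : {d : D | w.le d e}.Finite :=
        (w.finPast e).preimage Subtype.val_injective.injOn
      have hpast' : {e' : {a // a ∉ D} | w.le e' e}.Finite :=
        (w.finPast e).preimage Subtype.val_injective.injOn
      refine (((hpast.pimage h.f).image Sum.inl).union (hpast'.image Sum.inr)).subset ?_
      rintro (c' | e') hp
      exacts [Or.inl ⟨c', hp, rfl⟩, Or.inr ⟨e', hp, rfl⟩]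
  ρ := Sum.elim y.ρ fun e => w.ρ e
  real Z hZ := by
    let Y : Set y.carrier := {c | .inl c ∈ Z}
    let E : Set w.carrier := {a | ∃ ha : a ∉ D, .inr ⟨a, ha⟩ ∈ Z}
    have hsplit : Sum.elim y.ρ (fun e : {a // a ∉ D} => w.ρ e) '' Z =
        y.ρ '' Y ∪ w.ρ '' w.downClosure E := by
      ext t
      constructor
      · rintro ⟨c | e, hp, rfl⟩
        · exact Or.inl ⟨c, hp, rfl⟩
        · exact Or.inr ⟨e, w.subset_downClosure E ⟨e.2, hp⟩, rfl⟩
      · rintro (⟨c, hc, rfl⟩ | ⟨a, ⟨a₀, ⟨ha₀, hZa₀⟩, haa₀⟩, rfl⟩)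
        · exact ⟨.inl c, hc, rfl⟩
        by_cases haD : a ∈ D
        · obtain ⟨c, hc⟩ := htot ⟨a, haD⟩
          exact ⟨.inl c, hZ _ hZa₀ (.inl c) ⟨⟨a, haD⟩, haa₀, hc⟩,
            (h.commutes _ c hc).symm⟩
        · exact ⟨.inr ⟨a, haD⟩, hZ _ hZa₀ (.inr ⟨a, haD⟩) haa₀, rfl⟩
    rw [hsplit]
    refine C.union_mem (y.real Y fun c hc c' hc' => hZ _ hc (.inl c') hc')
      (w.image_downClosure_mem E) (w.image_downClosure_mem (D ∪ E)) ?_ ?_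
    · rintro _ ⟨c, -, rfl⟩
      obtain ⟨d, hd⟩ := h.surj c
      exact ⟨d.1, w.subset_downClosure _ (Or.inl d.2), h.commutes d c hd⟩
    · exact Set.image_mono fun a ⟨b, hb, hab⟩ => ⟨b, Or.inr hb, hab⟩

def graftMap {w : Realisation C} {D : Set w.carrier} (hD : w.IsDown D) {y : Realisation C}
    (h : RealMap (w.restrict D hD) y) (htot : h.IsTotal) :
    RealMap w (w.graft hD h htot) :=
  RealMap.ofRel
    (fun a p => match p with
      | .inl c => ∃ ha : a ∈ D, h.f ⟨a, ha⟩ = some c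
      | .inr e => e.1 = a)
    (by
      rintro a (c | e) (c' | e') h₁ h₂
      · obtain ⟨_, hc⟩ := h₁
        obtain ⟨_, hc'⟩ := h₂
        exact congrArg Sum.inl (Option.some.inj (hc.symm.trans hc'))
      · exact (e'.2 (h₂ ▸ h₁.1)).elim
      · exact (e.2 (h₁ ▸ h₂.1)).elim
      · exact congrArg Sum.inr (Subtype.ext (h₁.trans h₂.symm)))
    (by
      rintro (c | e)
      · obtain ⟨d, hd⟩ := h.surj c
        exact ⟨d.1, d.2, hd⟩
      · exact ⟨e, rfl⟩)
    (by
      rintro a (c | e) hR (c' | e') hle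
      · obtain ⟨ha, hc⟩ := hR
        obtain ⟨d', hd', hd'c⟩ := h.lift hc hle
        exact ⟨d'.1, hd', d'.2, hd'c⟩
      · exact hle.elim
      · obtain ⟨d, hd, hdc⟩ := hle
        exact ⟨d.1, hR ▸ hd, d.2, hdc⟩
      · exact ⟨e', hR ▸ hle, rfl⟩)
    (by
      rintro a (c | e) hR
      · exact h.commutes _ c hR.2
      · exact hR ▸ rfl)

theorem Extremal.restrict {w : Realisation C} (hw : w.Extremal) {D : Set w.carrier}
    (hD : w.IsDown D) : (w.restrict D hD).Extremal := by
  intro y h htot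
  have hH : (graftMap hD h htot).IsIso := by
    refine hw _ _ fun a => ?_
    by_cases ha : a ∈ D
    · obtain ⟨c, hc⟩ := htot ⟨a, ha⟩
      exact ⟨Sum.inl c, RealMap.ofRel_f_eq_some.2 ⟨ha, hc⟩⟩
    · exact ⟨Sum.inr ⟨a, ha⟩, RealMap.ofRel_f_eq_some.2 rfl⟩
  have hHd : ∀ {d : (w.restrict D hD).carrier} {c}, h.f d = some c →
      (graftMap hD h htot).f d.1 = some (.inl c) :=
    fun hc => RealMap.ofRel_f_eq_some.2 ⟨_, hc⟩
  exact RealMap.isIso_of_injective_of_monotone htot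
    (fun hc hc' => Subtype.ext (hH.injective (hHd hc) (hHd hc')))
    fun hc hc' hle => hH.monotone (hHd hc) (hHd hc') hle

end Realisation

namespace Realisation.Extremal

open RealMap

variable {w x y : Realisation C}

theorem isIso_restrictDom (hw : w.Extremal) (m : RealMap w x) :
    (m.restrictDom (hw.isDown_dom m)).IsIso :=
  hw.restrict _ x _ fun d => d.2.imp fun _ hb => ofRel_f_eq_some.2 hb

theorem map_injective (hw : w.Extremal) (m : RealMap w x) {a a' : w.carrier} {b : x.carrier}
    (ha : m.f a = some b) (ha' : m.f a' = some b) : a = a' :=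
  congrArg Subtype.val <| (hw.isIso_restrictDom m).injective (a := ⟨a, b, ha⟩)
    (a' := ⟨a', b, ha'⟩) (ofRel_f_eq_some.2 ha) (ofRel_f_eq_some.2 ha')

theorem map_le_iff (hw : w.Extremal) (m : RealMap w x) {a a' : w.carrier} {b b' : x.carrier}
    (ha : m.f a = some b) (ha' : m.f a' = some b') : x.le b' b ↔ w.le a' a := by
  constructor
  · intro hb
    obtain ⟨a'', ha'', hma''⟩ := m.lift ha hb
    rwa [hw.map_injective m ha' hma'']
  · exact (hw.isIso_restrictDom m).monotone (a := ⟨a, b, ha⟩) (a' := ⟨a', b', ha'⟩)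
      (ofRel_f_eq_some.2 ha) (ofRel_f_eq_some.2 ha')

theorem pastBisim (hw : w.Extremal) (m : RealMap w x) :
    PastBisim w x fun a b => m.f a = some b where
  rho_eq := m.commutes _ _
  forth := by
    intro a b hab a' ⟨hle, hne⟩
    obtain ⟨b', hb'⟩ := hw.isDown_dom m a ⟨b, hab⟩ a' hle
    refine ⟨b', ⟨(hw.map_le_iff m hab hb').2 hle, fun h => ?_⟩, hb'⟩
    exact hne (hw.map_injective m hb' (h ▸ hab))
  back := by
    intro a b hab b' ⟨hle, hne⟩
    obtain ⟨a', ha', hma'⟩ := m.lift hab hle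
    exact ⟨a', ⟨ha', fun h => hne (Option.some.inj ((h ▸ hma').symm.trans hab))⟩, hma'⟩

theorem subsingleton (hw : w.Extremal) : Subsingleton (RealMap w x) := by
  have key : ∀ (k k' : RealMap w x) {a b}, k.f a = some b → k'.f a = some b := by
    intro k k' a b hab
    obtain ⟨a', ha'⟩ := k'.surj b
    rwa [(hw.pastBisim k).symm.eq_of_separated hw.separated (hw.pastBisim k').symm hab ha']
  exact ⟨fun k k' => RealMap.ext fun a => Option.ext fun b => ⟨key k k', key k' k⟩⟩

theorem mem_of_map_restrict (hw : w.Extremal) {D : Set w.carrier} (hD : w.IsDown D)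
    (φ : RealMap (w.restrict D hD) w) (a : w.carrier) : a ∈ D := by
  have hid : (toRestrict w D hD).trans φ = RealMap.id w := (hw.subsingleton).elim _ _
  obtain ⟨d, hd, -⟩ := trans_f_eq_some.1 (hid ▸ id_f a)
  exact toRestrict_f_eq_some.1 hd ▸ d.2

theorem rle_of_dom_subset (hw : w.Extremal) (m₁ : RealMap w x) (m₂ : RealMap w y)
    (h : m₂.dom ⊆ m₁.dom) : RLe y x := by
  refine ⟨ofRel (fun b c => ∃ a, m₁.f a = some b ∧ m₂.f a = some c) ?_ ?_ ?_ ?_⟩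
  · rintro b c c' ⟨a, hab, hac⟩ ⟨a', ha'b, ha'c'⟩
    cases hw.map_injective m₁ hab ha'b
    exact Option.some.inj (hac.symm.trans ha'c')
  · intro c
    obtain ⟨a, hac⟩ := m₂.surj c
    obtain ⟨b, hab⟩ := h ⟨c, hac⟩
    exact ⟨b, a, hab, hac⟩
  · rintro b c ⟨a, hab, hac⟩ c' hc'
    obtain ⟨a', ha', ha'c'⟩ := m₂.lift hac hc'
    obtain ⟨b', ha'b'⟩ := h ⟨c', ha'c'⟩
    exact ⟨b', (hw.map_le_iff m₁ hab ha'b').2 ha', a', ha'b', ha'c'⟩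
  · rintro b c ⟨a, hab, hac⟩
    exact (m₁.commutes a b hab).symm.trans (m₂.commutes a c hac)

/-- Maps into restrictions of an extremal `w` glue along the union of their targets: two of
them can only send an event to events of `w` with bisimilar pasts, which coincide. -/
theorem exists_map_restrict_iUnion (hw : w.Extremal) (hy : y.Extremal) {ι : Sort*}
    {D : ι → Set w.carrier} (hD : ∀ i, w.IsDown (D i))
    (k : ∀ i, RealMap y (w.restrict (D i) (hD i))) :
    Nonempty (RealMap y (w.restrict (⋃ i, D i) (isDown_iUnion hD))) := by
  have coh : ∀ {a i j} {b : D i} {b' : D j}, (k i).f a = some b → (k j).f a = some b' →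
      b.1 = b'.1 := fun hb hb' =>
    ((hy.pastBisim (k _)).comp (pastBisim_val (hD _))).eq_of_separated hw.separated
      ((hy.pastBisim (k _)).comp (pastBisim_val (hD _))) ⟨_, hb, rfl⟩ ⟨_, hb', rfl⟩
  refine ⟨ofRel (fun a d => ∃ i b, (k i).f a = some b ∧ b.1 = d.1) ?_ ?_ ?_ ?_⟩
  · rintro a d d' ⟨i, b, hb, hbd⟩ ⟨j, b', hb', hbd'⟩
    exact Subtype.ext (hbd.symm.trans ((coh hb hb').trans hbd'))
  · intro d
    obtain ⟨i, hi⟩ := Set.mem_iUnion.1 d.2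
    obtain ⟨a, ha⟩ := (k i).surj ⟨d.1, hi⟩
    exact ⟨a, i, _, ha, rfl⟩
  · rintro a d ⟨i, b, hb, hbd⟩ d' hd'
    have hle : w.le d'.1 b.1 := by rw [hbd]; exact hd'
    obtain ⟨a', ha', hka'⟩ := (k i).lift (b' := ⟨d'.1, hD i b.1 b.2 d'.1 hle⟩) hb hle
    exact ⟨a', ha', i, _, hka', rfl⟩
  · rintro a d ⟨i, b, hb, hbd⟩
    exact ((k i).commutes a b hb).trans (congrArg w.ρ hbd)

theorem rIsLub_restrict_iUnion_dom (hw : w.Extremal) {X : Set (Realisation C)}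
    (m : ∀ x : X, RealMap w x) :
    RIsLub X (w.restrict (⋃ x, (m x).dom) (isDown_iUnion fun x => hw.isDown_dom (m x))) := by
  refine ⟨hw.restrict _, fun x hx => ?_, fun v hv hvb => ?_⟩
  · refine hw.rle_of_dom_subset (toRestrict w _ _) (m ⟨x, hx⟩) ?_
    rw [dom_toRestrict]
    exact Set.subset_iUnion (fun x => (m x).dom) ⟨x, hx⟩
  · refine hw.exists_map_restrict_iUnion hv (fun x => hw.isDown_dom (m x)) fun x => ?_
    exact (hvb x x.2).some.trans
      (hw.rle_of_dom_subset (m x) (toRestrict w _ _) (dom_toRestrict _ _).subset).some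

theorem rle_of_forall_rle_restrict_Iic (hw : w.Extremal) (hy : y.Extremal)
    (h : ∀ a, RLe (w.restrict _ (w.isDown_Iic a)) y) : RLe w y := by
  obtain ⟨k⟩ := hw.exists_map_restrict_iUnion hy (fun a => w.isDown_Iic a) fun a => (h a).some
  exact ⟨k.trans (ofRestrictOfForallMem _ fun a => Set.mem_iUnion.2 ⟨a, w.le_refl a⟩)⟩

end Realisation.Extremal

/-! ### The domain of extremal realisations -/

open Realisation RealMap

variable {p r : Realisation C}

theorem exists_rIsLub {X : Set (Realisation C)}
    (hbd : ∃ u : Realisation C, u.Extremal ∧ ∀ x ∈ X, RLe x u) : ∃ s, RIsLub X s := by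
  obtain ⟨u, hu, hub⟩ := hbd
  exact ⟨_, hu.rIsLub_restrict_iUnion_dom fun x => (hub x x.2).some⟩

/-- Below a least upper bound `s` of `X`, the domains of the maps `s → x`, `x ∈ X`, cover `s`;
the top of `p ⊑ s` lies in one of them, and that domain then contains the whole of `p`. -/
theorem rCompletePrime_of_hasTop (hp : p.Extremal) (htop : p.HasTop) : RCompletePrime p := by
  refine ⟨hp, fun X s _ ⟨hs, hub, hleast⟩ ⟨mp⟩ => ?_⟩
  let m : ∀ x : X, RealMap s x := fun x => (hub x x.2).some
  obtain ⟨φ⟩ := hleast _ (hs.restrict _) (hs.rIsLub_restrict_iUnion_dom m).2.1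
  obtain ⟨t, ht⟩ := htop
  obtain ⟨a, ha⟩ := mp.surj t
  obtain ⟨x, hx⟩ := Set.mem_iUnion.1 (hs.mem_of_map_restrict _ φ a)
  refine ⟨x, x.2, hs.rle_of_dom_subset (m x) mp ?_⟩
  rintro c ⟨b, hb⟩
  exact hs.isDown_dom (m x) a hx c ((hs.map_le_iff mp ha hb).1 (ht b))

theorem rCompletePrime_restrict_Iic (hr : r.Extremal) (a : r.carrier) :
    RCompletePrime (r.restrict _ (r.isDown_Iic a)) :=
  rCompletePrime_of_hasTop (hr.restrict _) ⟨⟨a, r.le_refl a⟩, fun c => c.2⟩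

theorem hasTop_of_rCompletePrime (hp : RCompletePrime p) : p.HasTop := by
  obtain ⟨hpe, hprime⟩ := hp
  let X := Set.range fun a => p.restrict _ (p.isDown_Iic a)
  have hlub : RIsLub X p := by
    refine ⟨hpe, ?_, fun v hv hvb => ?_⟩
    · rintro _ ⟨a, rfl⟩
      exact ⟨toRestrict p _ _⟩
    · exact hpe.rle_of_forall_rle_restrict_Iic hv fun a => hvb _ ⟨a, rfl⟩
  obtain ⟨_, ⟨a, rfl⟩, ⟨φ⟩⟩ :=
    hprime X p (by rintro _ ⟨a, rfl⟩; exact hpe.restrict _) hlub ⟨RealMap.id p⟩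
  exact ⟨a, hpe.mem_of_map_restrict _ φ⟩

theorem Realisation.Extremal.rIsLub_completePrimes (hr : r.Extremal) :
    RIsLub {p | RCompletePrime p ∧ RLe p r} r :=
  ⟨hr, fun _ hp => hp.2, fun _ hv hvb => hr.rle_of_forall_rle_restrict_Iic hv fun a =>
    hvb _ ⟨rCompletePrime_restrict_Iic hr a, ⟨toRestrict r _ _⟩⟩⟩

end

/-- The order of extremal realisations is a prime algebraic domain whose
complete primes are exactly the prime extremal realisations: compatible
subsets have least upper bounds; complete primes are exactly the extremal
realisations with a top element; and every extremal realisation is a least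
upper bound of the complete primes below it. -/
theorem stmt10 {A : Type u} (C : ConfigFamily A) :
    (∀ X : Set (Realisation C), (∀ x ∈ X, Realisation.Extremal x) →
        (∃ u : Realisation C, u.Extremal ∧ ∀ x ∈ X, RLe x u) →
        ∃ s : Realisation C, RIsLub X s) ∧
    (∀ p : Realisation C, p.Extremal → (RCompletePrime p ↔ p.HasTop)) ∧
    (∀ r : Realisation C, r.Extremal →
        RIsLub {p : Realisation C | RCompletePrime p ∧ RLe p r} r) :=
  ⟨fun _ _ hbd => exists_rIsLub hbd,
    fun _ hp => ⟨hasTop_of_rCompletePrime, rCompletePrime_of_hasTop hp⟩,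
    fun _ hr => hr.rIsLub_completePrimes⟩
end

section
/- For any equivalence family (A,≡): whenever y ∈ A, the set y_≡ = {{a}_≡ : a ∈ y} is a configuration of the collapse col(A,≡); and col(A,≡) is a replete general event structure. -/
universe u v w

/-- The data of a general event structure. -/
structure GESData (E : Type u) where
  Con : Set (Set E)
  en : Set E → E → Prop

/-- The axioms of a general event structure. -/
structure IsGES {E : Type u} (D : GESData E) : Prop where
  con_nonempty : D.Con.Nonempty
  con_fin : ∀ X ∈ D.Con, X.Finite
  con_mono : ∀ X Y, X ⊆ Y → Y ∈ D.Con → X ∈ D.Con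
  en_con : ∀ X e, D.en X e → X ∈ D.Con
  en_mono : ∀ X Y e, D.en X e → X ⊆ Y → Y ∈ D.Con → D.en Y e

/-- Configurations of a general event structure: consistent, secured subsets. -/
def GESCfg {E : Type u} (D : GESData E) (x : Set E) : Prop :=
  (∀ X ⊆ x, X.Finite → X ∈ D.Con) ∧
  ∀ e ∈ x, ∃ l : List E, l ≠ [] ∧ l.getLast? = some e ∧ (∀ a ∈ l, a ∈ x) ∧
    ∀ (i : ℕ) (h : i < l.length), D.en {a | a ∈ l.take i} (l.get ⟨i, h⟩)

/-- A map of general event structures. -/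
def IsGESMap {E : Type u} {E' : Type v} (D : GESData E) (D' : GESData E')
    (f : E → Option E') : Prop :=
  (∀ X ∈ D.Con, pimage f X ∈ D'.Con) ∧
  (∀ X ∈ D.Con, ∀ a₁ ∈ X, ∀ a₂ ∈ X, ∀ b, f a₁ = some b → f a₂ = some b → a₁ = a₂) ∧
  (∀ X e, D.en X e → ∀ b, f e = some b → D'.en (pimage f X) b)

/-- Consistency of the collapse: finite subsets of `y_≡` for `y` in the family. -/
def colCon {A : Type u} (C : ConfigFamily A) (eqA : A → A → Prop) : Set (Set (Quot eqA)) :=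
  {X | X.Finite ∧ ∃ y ∈ C.F, X ⊆ Quot.mk eqA '' y}

/-- Enabling of the collapse: `X ⊢ e` iff `X` is consistent and
`e ∈ y_≡ ⊆ X ∪ {e}` for some `y` in the family. -/
def colEn {A : Type u} (C : ConfigFamily A) (eqA : A → A → Prop)
    (X : Set (Quot eqA)) (e : Quot eqA) : Prop :=
  X ∈ colCon C eqA ∧ ∃ y ∈ C.F, e ∈ Quot.mk eqA '' y ∧ Quot.mk eqA '' y ⊆ X ∪ {e}

/-- The collapse of an equivalence family to a general event structure, whose
events are the equivalence classes. -/
def colGES {A : Type u} (C : ConfigFamily A) (eqA : A → A → Prop) : GESData (Quot eqA) :=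
  { Con := colCon C eqA, en := colEn C eqA }

/-- A general event structure is replete. -/
def Replete {E : Type u} (D : GESData E) : Prop :=
  (∀ e : E, ∃ X, D.en X e) ∧
  (∀ X ∈ D.Con, ∃ x, GESCfg D x ∧ x.Finite ∧ X ⊆ x) ∧
  (∀ X e, D.en X e → ∃ x, GESCfg D x ∧ x.Finite ∧ e ∈ x ∧ x ⊆ X ∪ {e})

/-! The collapse inherits everything from `A` through securing chains: a chain in `y ∈ A` maps
to a chain in `y_≡`, each step `[a₁, …, aᵢ] ⊢ aᵢ₊₁` being witnessed by the prefix
`{a₁, …, aᵢ₊₁} ∈ A`. Repleteness then only needs finite members of `A` inside a given one,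
and these come from the chains as well, glued together by the union axiom. -/

namespace ConfigFamily

variable {A : Type u} (C : ConfigFamily A)

theorem exists_finite_mem_subset_of_mem {x : Set A} (hx : x ∈ C.F) {a : A} (ha : a ∈ x) :
    ∃ z ∈ C.F, z.Finite ∧ z ⊆ x ∧ a ∈ z := by
  obtain ⟨l, hne, hlast, hlx, hprefix⟩ := C.secured x hx a ha
  have hl : {b | b ∈ l} ∈ C.F := by
    simpa using hprefix l.length (List.length_pos_iff.mpr hne) le_rfl
  exact ⟨_, hl, l.finite_toSet, hlx, List.mem_of_getLast? hlast⟩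

theorem sUnion_mem_of_forall_subset {X : Set (Set A)} (hXF : X ⊆ C.F) {y : Set A}
    (hy : y ∈ C.F) (hXy : ∀ w ∈ X, w ⊆ y) : ⋃₀ X ∈ C.F :=
  C.unionClosed X hXF fun _ hY _ => ⟨y, hy, fun w hw => hXy w (hY hw)⟩

theorem exists_finite_mem_between {y : Set A} (hy : y ∈ C.F) {S : Set A} (hS : S.Finite)
    (hSy : S ⊆ y) : ∃ z ∈ C.F, z.Finite ∧ S ⊆ z ∧ z ⊆ y := by
  choose z hzF hzfin hzy haz using
    fun a : S => C.exists_finite_mem_subset_of_mem hy (hSy a.2)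
  have : Finite S := hS.to_subtype
  have hzy' : ∀ w ∈ Set.range z, w ⊆ y := Set.forall_mem_range.2 hzy
  exact ⟨⋃₀ Set.range z, C.sUnion_mem_of_forall_subset (Set.range_subset_iff.2 hzF) hy hzy',
    (Set.finite_range z).sUnion (Set.forall_mem_range.2 hzfin),
    fun a ha => Set.mem_sUnion_of_mem (haz ⟨a, ha⟩) (Set.mem_range_self _),
    Set.sUnion_subset hzy'⟩

end ConfigFamily

section Collapse

variable {A : Type u} {C : ConfigFamily A} {eqA : A → A → Prop}

theorem image_mem_colCon {y : Set A} (hy : y ∈ C.F) {X : Set (Quot eqA)} (hX : X.Finite)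
    (hXy : X ⊆ Quot.mk eqA '' y) : X ∈ colCon C eqA :=
  ⟨hX, y, hy, hXy⟩

theorem colEn_getElem_of_take_mem {y : Set A} (hy : y ∈ C.F) {l : List A}
    (hly : ∀ a ∈ l, a ∈ y) {i : ℕ} (hi : i < l.length)
    (hprefix : {a | a ∈ l.take (i + 1)} ∈ C.F) :
    colEn C eqA {b | b ∈ (l.map (Quot.mk eqA)).take i} (Quot.mk eqA l[i]) := by
  have htake : {b | b ∈ (l.map (Quot.mk eqA)).take i} = Quot.mk eqA '' {a | a ∈ l.take i} := by
    ext b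
    simp [← List.map_take]
  have hsucc : l.take (i + 1) = l.take i ++ [l[i]] := (List.take_concat_get' l i hi).symm
  refine ⟨image_mem_colCon hy (List.finite_toSet _) ?_, _, hprefix, ⟨l[i], ?_, rfl⟩, ?_⟩
  · rw [htake]
    exact Set.image_mono fun a ha => hly a (List.mem_of_mem_take ha)
  · change l[i] ∈ l.take (i + 1)
    rw [hsucc]
    exact List.mem_append_right _ (List.mem_singleton_self _)
  · rintro _ ⟨a, ha, rfl⟩
    rw [Set.mem_ofPred_eq, hsucc, List.mem_append, List.mem_singleton] at ha
    rcases ha with ha | rfl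
    · exact Or.inl (htake ▸ ⟨a, ha, rfl⟩)
    · exact Or.inr rfl

theorem gesCfg_colGES_image {y : Set A} (hy : y ∈ C.F) :
    GESCfg (colGES C eqA) (Quot.mk eqA '' y) := by
  refine ⟨fun X hXy hX => image_mem_colCon hy hX hXy, ?_⟩
  rintro _ ⟨a, ha, rfl⟩
  obtain ⟨l, hne, hlast, hly, hprefix⟩ := C.secured y hy a ha
  refine ⟨l.map (Quot.mk eqA), by simpa using hne, by simp [List.getLast?_map, hlast], ?_,
    fun i hi => ?_⟩
  · simp only [List.mem_map]
    rintro _ ⟨b, hb, rfl⟩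
    exact ⟨b, hly b hb, rfl⟩
  · have hi' : i < l.length := by simpa using hi
    simpa only [colGES, List.get_eq_getElem, List.getElem_map] using
      colEn_getElem_of_take_mem hy hly hi' (hprefix (i + 1) i.succ_pos hi')

theorem colEn_image_of_mem {z : Set A} (hz : z ∈ C.F) (hzfin : z.Finite) {a : A}
    (ha : a ∈ z) :
    colEn C eqA (Quot.mk eqA '' z) (Quot.mk eqA a) :=
  ⟨image_mem_colCon hz (hzfin.image _) subset_rfl, z, hz, ⟨a, ha, rfl⟩, Set.subset_union_left⟩

theorem replete_colGES : Replete (colGES C eqA) := by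
  refine ⟨fun e => ?_, ?_, ?_⟩
  · induction e using Quot.ind with
    | mk a =>
      obtain ⟨x, hx, hax⟩ := C.covers a
      obtain ⟨z, hz, hzfin, -, haz⟩ := C.exists_finite_mem_subset_of_mem hx hax
      exact ⟨_, colEn_image_of_mem hz hzfin haz⟩
  · rintro X ⟨hX, y, hy, hXy⟩
    obtain ⟨S, hSy, hS, rfl⟩ := Set.exists_subset_image_finite_and.1 ⟨X, hXy, hX, rfl⟩
    obtain ⟨z, hz, hzfin, hSz, -⟩ := C.exists_finite_mem_between hy hS hSy
    exact ⟨_, gesCfg_colGES_image hz, hzfin.image _, Set.image_mono hSz⟩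
  · rintro X _ ⟨-, y, hy, ⟨a, hay, rfl⟩, hyX⟩
    obtain ⟨z, hz, hzfin, hzy, haz⟩ := C.exists_finite_mem_subset_of_mem hy hay
    exact ⟨_, gesCfg_colGES_image hz, hzfin.image _, ⟨a, haz, rfl⟩,
      (Set.image_mono hzy).trans hyX⟩

end Collapse

theorem stmt15_general {A : Type u} (C : ConfigFamily A) (eqA : A → A → Prop) :
    (∀ y ∈ C.F, GESCfg (colGES C eqA) (Quot.mk eqA '' y)) ∧
    Replete (colGES C eqA) :=
  ⟨fun _ hy => gesCfg_colGES_image hy, replete_colGES⟩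

/-- For any equivalence family `(A,≡)`: whenever `y ∈ A`, the set `y_≡` is a
configuration of the collapse `col(A,≡)`; and `col(A,≡)` is replete. -/
theorem stmt15 {A : Type u} (C : ConfigFamily A) (eqA : A → A → Prop)
    (heq : Equivalence eqA) :
    (∀ y ∈ C.F, GESCfg (colGES C eqA) (Quot.mk eqA '' y)) ∧
    Replete (colGES C eqA) :=
  stmt15_general C eqA
end
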